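/- Let 0 < μ ≤ L, Q := L/μ, σ ∈ [0, 1), and suppose 0 < α ≤ (1−σ²)²/(187QL). Then the positive vector δ := (1, 8Q², 6528Q²/(1−σ²)²) satisfies J_α δ ≤ (1 − μα/4) δ entrywise, and consequently ρ(J_α) ≤ ‖J_α‖_∞^δ ≤ 1 − μα/4. -/
import Mathlib


/-- The system matrix `J_α` governing GT-SVRG. -/
noncomputable def GTSVRGMatrixJ (μ L σ α : ℝ) : Matrix (Fin 3) (Fin 3) ℝ :=
  !![(1 + σ ^ 2) / 2, 0, 2 * α ^ 2 * L ^ 2 / (1 - σ ^ 2);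
     2 * L ^ 2 * α / μ, 1 - μ * α / 2, 0;
     120 / (1 - σ ^ 2), 87 / (1 - σ ^ 2), (3 + σ ^ 2) / 4]

/-- The weighted infinity matrix norm `‖A‖_∞^w = max_i (∑_j |A i j| * w j) / w i`
induced by a positive weight vector `w`. -/
noncomputable def wInfMatNorm {d : ℕ} (w : Fin d → ℝ) (A : Matrix (Fin d) (Fin d) ℝ) : ℝ :=
  ⨆ i, (∑ j, |A i j| * w j) / w i

open Matrix Module.End in
set_option maxHeartbeats 800000 in
lemma spec_bound_aux {d : ℕ} (w : Fin d → ℝ) (hw : ∀ i, 0 < w i)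
    (A : Matrix (Fin d) (Fin d) ℝ) (lam : ℂ)
    (hlam : lam ∈ spectrum ℂ (A.map (Complex.ofReal ·))) :
    ‖lam‖ ≤ ⨆ i, (∑ j, |A i j| * w j) / w i := by
  set B := A.map (Complex.ofReal ·) with hB
  rw [← AlgEquiv.spectrum_eq (Matrix.toLinAlgEquiv' (R := ℂ) (n := Fin d)),
    ← hasEigenvalue_iff_mem_spectrum] at hlam
  obtain ⟨v, hv⟩ := hlam.exists_hasEigenvector
  have hmul : B.mulVec v = lam • v := by
    have h := hv.1
    rw [mem_eigenspace_iff] at h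
    rwa [Matrix.toLinAlgEquiv'_apply] at h
  obtain ⟨j, hj⟩ := Function.ne_iff.mp hv.2
  obtain ⟨i, -, hi⟩ := Finset.exists_max_image Finset.univ (fun k => ‖v k‖ / w k)
    ⟨j, Finset.mem_univ j⟩
  have hj' : v j ≠ 0 := by simpa using hj
  have hvi : 0 < ‖v i‖ / w i :=
    lt_of_lt_of_le (div_pos (norm_pos_iff.mpr hj') (hw j)) (hi j (Finset.mem_univ j))
  have hvi' : 0 < ‖v i‖ := by
    by_contra h
    have : ‖v i‖ = 0 := le_antisymm (not_lt.mp h) (norm_nonneg _)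
    rw [this] at hvi; simp at hvi
  have hkey : ‖lam‖ * ‖v i‖ ≤ (∑ k, |A i k| * w k) * (‖v i‖ / w i) := by
    calc ‖lam‖ * ‖v i‖ = ‖(B.mulVec v) i‖ := by
          rw [hmul]; simp [norm_smul]
      _ = ‖∑ k, (A i k : ℂ) * v k‖ := by
          simp [Matrix.mulVec, dotProduct, hB, Matrix.map_apply]
      _ ≤ ∑ k, ‖(A i k : ℂ) * v k‖ := norm_sum_le _ _
      _ ≤ ∑ k, |A i k| * (w k * (‖v i‖ / w i)) := by
          apply Finset.sum_le_sum
          intro k _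
          rw [norm_mul, Complex.norm_real, Real.norm_eq_abs]
          have : ‖v k‖ ≤ w k * (‖v i‖ / w i) := by
            rw [← div_le_iff₀' (hw k)]
            exact hi k (Finset.mem_univ k)
          exact mul_le_mul_of_nonneg_left this (abs_nonneg _)
      _ = (∑ k, |A i k| * w k) * (‖v i‖ / w i) := by
          rw [Finset.sum_mul]; exact Finset.sum_congr rfl fun k _ => by ring
  have h2 : ‖lam‖ ≤ (∑ k, |A i k| * w k) / w i := by
    rw [le_div_iff₀ (hw i)]
    have h3 : ‖lam‖ * ‖v i‖ * w i ≤ (∑ k, |A i k| * w k) * ‖v i‖ := by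
      have := mul_le_mul_of_nonneg_right hkey (hw i).le
      rwa [mul_assoc ((∑ k, |A i k| * w k)), div_mul_cancel₀ _ (hw i).ne'] at this
    have h4 : (‖lam‖ * w i) * ‖v i‖ ≤ (∑ k, |A i k| * w k) * ‖v i‖ := by
      rw [show (‖lam‖ * w i) * ‖v i‖ = ‖lam‖ * ‖v i‖ * w i from by ring]; exact h3
    exact le_of_mul_le_mul_right h4 hvi'
  exact h2.trans (le_ciSup (f := fun i => (∑ j, |A i j| * w j) / w i)
    (Set.Finite.bddAbove (Set.finite_range _)) i)

set_option maxHeartbeats 1000000 in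
/-- For `0 < α ≤ (1−σ²)²/(187QL)`, the positive vector
`δ = (1, 8Q², 6528Q²/(1−σ²)²)` satisfies `J_α δ ≤ (1 − μα/4) δ` entrywise, hence
`ρ(J_α) ≤ ‖J_α‖_∞^δ ≤ 1 − μα/4`. -/
theorem gtsvrg_J_spectral_bound (μ L σ α Q : ℝ)
    (hμ : 0 < μ) (hμL : μ ≤ L) (hQ : Q = L / μ)
    (hσ0 : 0 ≤ σ) (hσ1 : σ < 1)
    (hα0 : 0 < α) (hα : α ≤ (1 - σ ^ 2) ^ 2 / (187 * Q * L)) :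
    (GTSVRGMatrixJ μ L σ α).mulVec ![1, 8 * Q ^ 2, 6528 * Q ^ 2 / (1 - σ ^ 2) ^ 2] ≤
        (1 - μ * α / 4) • ![1, 8 * Q ^ 2, 6528 * Q ^ 2 / (1 - σ ^ 2) ^ 2] ∧
      (∀ lam ∈ spectrum ℂ ((GTSVRGMatrixJ μ L σ α).map (Complex.ofReal ·)),
        ‖lam‖ ≤ wInfMatNorm ![1, 8 * Q ^ 2, 6528 * Q ^ 2 / (1 - σ ^ 2) ^ 2]
          (GTSVRGMatrixJ μ L σ α)) ∧
      wInfMatNorm ![1, 8 * Q ^ 2, 6528 * Q ^ 2 / (1 - σ ^ 2) ^ 2] (GTSVRGMatrixJ μ L σ α) ≤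
        1 - μ * α / 4 := by
  have hL : 0 < L := lt_of_lt_of_le hμ hμL
  have hs : 0 < 1 - σ ^ 2 := by nlinarith
  have hs1 : 1 - σ ^ 2 ≤ 1 := by nlinarith
  have hQ0 : 0 < Q := by rw [hQ]; positivity
  have hQ1 : 1 ≤ Q := by rw [hQ, le_div_iff₀ hμ]; linarith
  have hkey : α * (187 * Q * L) ≤ (1 - σ ^ 2) ^ 2 := by
    rw [← le_div_iff₀ (by positivity)]; exact hα
  have hkey2 : 187 * L ^ 2 * α ≤ μ * (1 - σ ^ 2) ^ 2 := by
    rw [hQ] at hkey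
    have h := mul_le_mul_of_nonneg_left hkey hμ.le
    calc 187 * L ^ 2 * α = μ * (α * (187 * (L / μ) * L)) := by field_simp
      _ ≤ μ * (1 - σ ^ 2) ^ 2 := h
  have h187 : 187 * (μ * α) ≤ (1 - σ ^ 2) ^ 2 := by
    have h1 : 187 * μ ^ 2 * α ≤ 187 * L ^ 2 * α := by
      nlinarith [mul_nonneg hα0.le (show (0:ℝ) ≤ L ^ 2 - μ ^ 2 by nlinarith)]
    have h2 : μ * (187 * (μ * α)) ≤ μ * (1 - σ ^ 2) ^ 2 := by nlinarith
    exact le_of_mul_le_mul_left h2 hμ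
  have hμα : μ * α ≤ 1 / 187 := by nlinarith
  -- row inequalities
  have row1 : (1 + σ ^ 2) / 2 * 1 + 0 * (8 * Q ^ 2) +
      2 * α ^ 2 * L ^ 2 / (1 - σ ^ 2) * (6528 * Q ^ 2 / (1 - σ ^ 2) ^ 2) ≤
      (1 - μ * α / 4) * 1 := by
    have r1 : 13056 * α ^ 2 * L ^ 2 * Q ^ 2 ≤
        ((1 - σ ^ 2) / 2 - μ * α / 4) * (1 - σ ^ 2) ^ 3 := by
      have e : 13056 * α ^ 2 * L ^ 2 * Q ^ 2 =
          13056 / 34969 * (α * (187 * Q * L)) ^ 2 := by ring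
      rw [e]
      have h1 : (α * (187 * Q * L)) ^ 2 ≤ ((1 - σ ^ 2) ^ 2) ^ 2 :=
        pow_le_pow_left₀ (by positivity) hkey 2
      nlinarith [pow_pos hs 3, pow_pos hs 4, sq_nonneg (1 - σ ^ 2), hμα,
        mul_pos (pow_pos hs 3) hμ, pow_le_pow_left₀ hs.le hs1 4]
    have e2 : 2 * α ^ 2 * L ^ 2 / (1 - σ ^ 2) * (6528 * Q ^ 2 / (1 - σ ^ 2) ^ 2) =
        13056 * α ^ 2 * L ^ 2 * Q ^ 2 / (1 - σ ^ 2) ^ 3 := by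
      field_simp; ring
    rw [e2]
    have h3 : 13056 * α ^ 2 * L ^ 2 * Q ^ 2 / (1 - σ ^ 2) ^ 3 ≤
        (1 - σ ^ 2) / 2 - μ * α / 4 := by
      rw [div_le_iff₀ (by positivity)]; exact r1
    linarith
  have row2 : 2 * L ^ 2 * α / μ * 1 + (1 - μ * α / 2) * (8 * Q ^ 2) +
      0 * (6528 * Q ^ 2 / (1 - σ ^ 2) ^ 2) ≤ (1 - μ * α / 4) * (8 * Q ^ 2) := by
    have : 2 * L ^ 2 * α / μ * 1 + (1 - μ * α / 2) * (8 * Q ^ 2) +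
        0 * (6528 * Q ^ 2 / (1 - σ ^ 2) ^ 2) = (1 - μ * α / 4) * (8 * Q ^ 2) := by
      rw [hQ]; field_simp; ring
    linarith
  have row3 : 120 / (1 - σ ^ 2) * 1 + 87 / (1 - σ ^ 2) * (8 * Q ^ 2) +
      (3 + σ ^ 2) / 4 * (6528 * Q ^ 2 / (1 - σ ^ 2) ^ 2) ≤
      (1 - μ * α / 4) * (6528 * Q ^ 2 / (1 - σ ^ 2) ^ 2) := by
    have hQsq : (1:ℝ) ≤ Q ^ 2 := by nlinarith
    have key : 120 * (1 - σ ^ 2) + 696 * Q ^ 2 * (1 - σ ^ 2) +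
        (3 + σ ^ 2) * 1632 * Q ^ 2 ≤ (1 - μ * α / 4) * (6528 * Q ^ 2) := by
      linarith [mul_le_mul_of_nonneg_left h187 (sq_nonneg Q),
        mul_le_mul_of_nonneg_left hs1 (mul_nonneg (sq_nonneg Q) hs.le),
        mul_le_mul_of_nonneg_right hQsq hs.le, hs]
    calc 120 / (1 - σ ^ 2) * 1 + 87 / (1 - σ ^ 2) * (8 * Q ^ 2) +
        (3 + σ ^ 2) / 4 * (6528 * Q ^ 2 / (1 - σ ^ 2) ^ 2)
        = (120 * (1 - σ ^ 2) + 696 * Q ^ 2 * (1 - σ ^ 2) +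
            (3 + σ ^ 2) * 1632 * Q ^ 2) / (1 - σ ^ 2) ^ 2 := by
          field_simp; ring
      _ ≤ ((1 - μ * α / 4) * (6528 * Q ^ 2)) / (1 - σ ^ 2) ^ 2 := by
          gcongr
      _ = (1 - μ * α / 4) * (6528 * Q ^ 2 / (1 - σ ^ 2) ^ 2) := by ring
  -- nonnegativity of entries
  have e11 : (0:ℝ) ≤ (1 + σ ^ 2) / 2 := by positivity
  have e13 : (0:ℝ) ≤ 2 * α ^ 2 * L ^ 2 / (1 - σ ^ 2) := by positivity
  have e21 : (0:ℝ) ≤ 2 * L ^ 2 * α / μ := by positivity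
  have e22 : (0:ℝ) ≤ 1 - μ * α / 2 := by linarith
  have e31 : (0:ℝ) ≤ 120 / (1 - σ ^ 2) := by positivity
  have e32 : (0:ℝ) ≤ 87 / (1 - σ ^ 2) := by positivity
  have e33 : (0:ℝ) ≤ (3 + σ ^ 2) / 4 := by positivity
  refine ⟨?_, ?_, ?_⟩
  · intro i
    fin_cases i <;>
      simp only [GTSVRGMatrixJ, Matrix.mulVec, dotProduct, Fin.sum_univ_three,
        Matrix.cons_val', Matrix.cons_val_zero, Matrix.cons_val_one, Matrix.head_cons,
        Matrix.empty_val', Matrix.cons_val_fin_one, Matrix.head_fin_const,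
        Matrix.cons_val_two, Matrix.tail_cons, Matrix.of_apply, Pi.smul_apply,
        smul_eq_mul]
    · exact row1
    · exact row2
    · exact row3
  · intro lam hlam
    have hw : ∀ i : Fin 3, 0 < (![1, 8 * Q ^ 2, 6528 * Q ^ 2 / (1 - σ ^ 2) ^ 2]) i := by
      intro i; fin_cases i <;> simp <;> positivity
    exact spec_bound_aux _ hw _ lam hlam
  · rw [wInfMatNorm]
    apply ciSup_le
    intro i
    have hwpos : ∀ i : Fin 3, 0 < (![1, 8 * Q ^ 2, 6528 * Q ^ 2 / (1 - σ ^ 2) ^ 2]) i := by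
      intro i; fin_cases i <;> simp <;> positivity
    fin_cases i <;>
      simp only [GTSVRGMatrixJ, Fin.sum_univ_three, Fin.reduceFinMk, Matrix.cons_val',
        Matrix.cons_val_zero, Matrix.cons_val_one, Matrix.head_cons, Matrix.empty_val',
        Matrix.cons_val_fin_one, Matrix.head_fin_const, Matrix.cons_val_two, Matrix.tail_cons,
        Matrix.of_apply]
    · rw [div_le_iff₀ (by exact hwpos 0)]
      rw [abs_of_nonneg e11, abs_of_nonneg e13, abs_zero]
      calc (1 + σ ^ 2) / 2 * 1 + 0 * (8 * Q ^ 2) +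
          2 * α ^ 2 * L ^ 2 / (1 - σ ^ 2) * (6528 * Q ^ 2 / (1 - σ ^ 2) ^ 2)
          ≤ (1 - μ * α / 4) * 1 := row1
        _ = (1 - μ * α / 4) * (![1, 8 * Q ^ 2, 6528 * Q ^ 2 / (1 - σ ^ 2) ^ 2]) 0 := by simp
    · rw [div_le_iff₀ (by exact hwpos 1)]
      rw [abs_of_nonneg e21, abs_of_nonneg e22, abs_zero]
      calc 2 * L ^ 2 * α / μ * 1 + (1 - μ * α / 2) * (8 * Q ^ 2) +
          0 * (6528 * Q ^ 2 / (1 - σ ^ 2) ^ 2)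
          ≤ (1 - μ * α / 4) * (8 * Q ^ 2) := row2
        _ = (1 - μ * α / 4) * (![1, 8 * Q ^ 2, 6528 * Q ^ 2 / (1 - σ ^ 2) ^ 2]) 1 := by simp
    · rw [div_le_iff₀ (by exact hwpos 2)]
      rw [abs_of_nonneg e31, abs_of_nonneg e32, abs_of_nonneg e33]
      calc 120 / (1 - σ ^ 2) * 1 + 87 / (1 - σ ^ 2) * (8 * Q ^ 2) +
          (3 + σ ^ 2) / 4 * (6528 * Q ^ 2 / (1 - σ ^ 2) ^ 2)
          ≤ (1 - μ * α / 4) * (6528 * Q ^ 2 / (1 - σ ^ 2) ^ 2) := row3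
        _ = (1 - μ * α / 4) * (![1, 8 * Q ^ 2, 6528 * Q ^ 2 / (1 - σ ^ 2) ^ 2]) 2 := by simp
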